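/- Let b₁, b₂ be nonzero complex numbers and consider the deformed B₂ map φ̃(x₁,x₂) = (x₁', x₂') with x₁' = (x₂² + b₁)/x₁ and x₂' = (x₁' + b₂)/x₂. Then there exist constants κ₁, κ₂, κ₃, κ₄ ∈ ℂ such that the rational function K̃(x₁,x₂) = x₂ + κ₁/x₂ + κ₂·x₁/x₂ + κ₃·x₂/x₁ + κ₄/(x₁x₂) satisfies K̃(φ̃(x₁,x₂)) = K̃(x₁,x₂) for all x₁, x₂ at which both sides are defined, if and only if b₁ = b₂. Moreover, when b₁ = b₂ = β, the invariant is K̃(x₁,x₂) = x₂ + (1+β)/x₂ + x₁/x₂ + x₂/x₁ + β/(x₁x₂), and hence φ̃ is a Liouville integrable map of the plane. -/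

import Mathlib

/-!
Over its common denominator, `K̃ ∘ φ̃ - K̃` has as numerator a polynomial in `x₁` and `x₂²`.
Invariance makes it vanish for cofinitely many `x₂²` and, for each of these, cofinitely many
`x₁`, so all its coefficients vanish. Three of them are `1 - κ₃`, `κ₂ - 1` and
`b₂² κ₃ - b₁ b₂ κ₂`, which together give `b₂ (b₁ - b₂) = 0`. Conversely, for `b₁ = b₂ = β` and
`κ = (1 + β, 1, 1, β)` every coefficient vanishes.
-/

/-- The candidate first integral
`K̃(x₁,x₂) = x₂ + κ₁/x₂ + κ₂·x₁/x₂ + κ₃·x₂/x₁ + κ₄/(x₁x₂)` of the deformed B₂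
map. -/
noncomputable def KtilB2 (κ₁ κ₂ κ₃ κ₄ x₁ x₂ : ℂ) : ℂ :=
  x₂ + κ₁ / x₂ + κ₂ * x₁ / x₂ + κ₃ * x₂ / x₁ + κ₄ / (x₁ * x₂)

open Polynomial Filter

theorem eq_zero_of_eventually_sum_mul_pow_eq_zero {K : Type*} [CommRing K] [IsDomain K]
    [Infinite K] {n : ℕ} {c : Fin n → K}
    (h : ∀ᶠ x in cofinite, ∑ i, c i * x ^ (i : ℕ) = 0) : c = 0 := by
  set p : K[X] := ∑ i, C (c i) * X ^ (i : ℕ)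
  have hp : p = 0 := by
    refine p.eq_zero_of_infinite_isRoot (frequently_cofinite_iff_infinite.1 ?_)
    refine h.frequently.mono fun x hx => ?_
    simpa [p, eval_finsetSum] using hx
  funext i
  simpa [p, finsetSum_coeff, coeff_C_mul_X_pow, Fin.val_inj] using congrArg (coeff · i) hp

theorem eq_zero_of_eventually_sum_sum_mul_pow_eq_zero {K : Type*} [CommRing K] [IsDomain K]
    [Infinite K] {m n : ℕ} {a : Matrix (Fin m) (Fin n) K}
    (h : ∀ᶠ y in cofinite, ∀ᶠ x in cofinite,
      ∑ i, ∑ j, a i j * x ^ (i : ℕ) * y ^ (j : ℕ) = 0) : a = 0 := by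
  have hrows : ∀ᶠ y in cofinite, ∀ i, ∑ j, a i j * y ^ (j : ℕ) = 0 := by
    refine h.mono fun y hy => congrFun (eq_zero_of_eventually_sum_mul_pow_eq_zero ?_)
    refine hy.mono fun x hx => ?_
    simpa [Finset.sum_mul, mul_right_comm] using hx
  ext i j
  exact congrFun (eq_zero_of_eventually_sum_mul_pow_eq_zero (hrows.mono fun y hy => hy i)) j

/-- The entry `(i, j)` is the coefficient of `x₁ ^ i * x₂ ^ (2 * j)` in the numerator of
`K̃ ∘ φ̃ - K̃` over the common denominator `x₁ x₂ (x₂² + b₁) (x₂² + b₁ + b₂ x₁)`. -/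
def invarianceCoeffs (b₁ b₂ κ₁ κ₂ κ₃ κ₄ : ℂ) : Matrix (Fin 4) (Fin 4) ℂ :=
  !![b₁^3 - b₁^2*κ₄, 3*b₁^2 - 2*b₁*κ₄ - b₁^2*κ₃, 3*b₁ - κ₄ - 2*b₁*κ₃, 1 - κ₃;
    -(b₁*b₂*κ₄) + b₁^2*κ₃ - b₁^2*κ₁ + 2*b₁^2*b₂,
      -(b₂*κ₄) + 2*b₁*κ₃ - 2*b₁*κ₁ + 4*b₁*b₂ - b₁*b₂*κ₃ - b₁^2 + b₁^2*κ₂,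
      κ₃ - κ₁ + 2*b₂ - b₂*κ₃ - 2*b₁ + 2*b₁*κ₂, κ₂ - 1;
    2*b₁*b₂*κ₃ - b₁*b₂*κ₁ + b₁*b₂^2 - b₁^2*κ₂,
      2*b₂*κ₃ - b₂*κ₁ + b₂^2 - 2*b₁*κ₂ + b₁*κ₁ - b₁*b₂, κ₁ - κ₂ - b₂, 0;
    b₂^2*κ₃ - b₁*b₂*κ₂, κ₄ - b₂*κ₂, 0, 0]

theorem invarianceCoeffs_self (β : ℂ) : invarianceCoeffs β β (1 + β) 1 1 β = 0 := by
  ext i j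
  fin_cases i <;> fin_cases j <;> simp [invarianceCoeffs] <;> ring

theorem deformedB2_snd_eq {b₁ b₂ x₁ x₂ : ℂ} (h₁ : x₁ ≠ 0) (h₂ : x₂ ≠ 0) :
    ((x₂ ^ 2 + b₁) / x₁ + b₂) / x₂ = (x₂ ^ 2 + b₁ + b₂ * x₁) / (x₁ * x₂) := by
  field_simp

theorem KtilB2_deformedB2_sub {b₁ b₂ κ₁ κ₂ κ₃ κ₄ x₁ x₂ : ℂ} (h₁ : x₁ ≠ 0) (h₂ : x₂ ≠ 0)
    (hA : x₂ ^ 2 + b₁ ≠ 0) (hB : x₂ ^ 2 + b₁ + b₂ * x₁ ≠ 0) :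
    KtilB2 κ₁ κ₂ κ₃ κ₄ ((x₂ ^ 2 + b₁) / x₁) (((x₂ ^ 2 + b₁) / x₁ + b₂) / x₂) -
        KtilB2 κ₁ κ₂ κ₃ κ₄ x₁ x₂ =
      (∑ i, ∑ j, invarianceCoeffs b₁ b₂ κ₁ κ₂ κ₃ κ₄ i j * x₁ ^ (i : ℕ) * (x₂ ^ 2) ^ (j : ℕ)) /
        (x₁ * x₂ * (x₂ ^ 2 + b₁) * (x₂ ^ 2 + b₁ + b₂ * x₁)) := by
  rw [deformedB2_snd_eq h₁ h₂]
  simp only [KtilB2, invarianceCoeffs, Fin.sum_univ_four, Matrix.of_apply, Matrix.cons_val',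
    Matrix.cons_val, Matrix.cons_val_fin_one, Fin.coe_ofNat_eq_mod, Nat.reduceMod]
  field_simp
  ring

theorem KtilB2_deformedB2_eq_iff {b₁ b₂ κ₁ κ₂ κ₃ κ₄ x₁ x₂ : ℂ} (h₁ : x₁ ≠ 0) (h₂ : x₂ ≠ 0)
    (hA : x₂ ^ 2 + b₁ ≠ 0) (hB : x₂ ^ 2 + b₁ + b₂ * x₁ ≠ 0) :
    KtilB2 κ₁ κ₂ κ₃ κ₄ ((x₂ ^ 2 + b₁) / x₁) (((x₂ ^ 2 + b₁) / x₁ + b₂) / x₂) =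
        KtilB2 κ₁ κ₂ κ₃ κ₄ x₁ x₂ ↔
      ∑ i, ∑ j, invarianceCoeffs b₁ b₂ κ₁ κ₂ κ₃ κ₄ i j * x₁ ^ (i : ℕ) * (x₂ ^ 2) ^ (j : ℕ) = 0 := by
  rw [← sub_eq_zero, KtilB2_deformedB2_sub h₁ h₂ hA hB, div_eq_zero_iff,
    or_iff_left (by simp [*])]

theorem invarianceCoeffs_eq_zero_of_invariant {b₁ b₂ κ₁ κ₂ κ₃ κ₄ : ℂ} (hb₂ : b₂ ≠ 0)
    (h : ∀ x₁ x₂ : ℂ, x₁ ≠ 0 → x₂ ≠ 0 →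
      (x₂ ^ 2 + b₁) / x₁ ≠ 0 → ((x₂ ^ 2 + b₁) / x₁ + b₂) / x₂ ≠ 0 →
      KtilB2 κ₁ κ₂ κ₃ κ₄ ((x₂ ^ 2 + b₁) / x₁) (((x₂ ^ 2 + b₁) / x₁ + b₂) / x₂) =
        KtilB2 κ₁ κ₂ κ₃ κ₄ x₁ x₂) :
    invarianceCoeffs b₁ b₂ κ₁ κ₂ κ₃ κ₄ = 0 := by
  refine eq_zero_of_eventually_sum_sum_mul_pow_eq_zero ?_
  filter_upwards [eventually_cofinite_ne 0, eventually_cofinite_ne (-b₁)] with u hu hub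
  obtain ⟨x₂, rfl⟩ := IsAlgClosed.exists_pow_nat_eq u two_pos
  filter_upwards [eventually_cofinite_ne 0, eventually_cofinite_ne (-(x₂ ^ 2 + b₁) / b₂)]
    with x₁ h₁ h₁B
  have h₂ : x₂ ≠ 0 := by rintro rfl; simp at hu
  have hA : x₂ ^ 2 + b₁ ≠ 0 := fun h => hub (eq_neg_of_add_eq_zero_left h)
  have hB : x₂ ^ 2 + b₁ + b₂ * x₁ ≠ 0 := fun h =>
    h₁B (by rw [eq_div_iff hb₂]; linear_combination h)
  refine (KtilB2_deformedB2_eq_iff h₁ h₂ hA hB).1 (h x₁ x₂ h₁ h₂ (div_ne_zero hA h₁) ?_)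
  rw [deformedB2_snd_eq h₁ h₂]
  exact div_ne_zero hB (mul_ne_zero h₁ h₂)

theorem KtilB2_deformedB2_eq_self {β x₁ x₂ : ℂ} (h₁ : x₁ ≠ 0) (h₂ : x₂ ≠ 0)
    (h₁' : (x₂ ^ 2 + β) / x₁ ≠ 0) (h₂' : ((x₂ ^ 2 + β) / x₁ + β) / x₂ ≠ 0) :
    KtilB2 (1 + β) 1 1 β ((x₂ ^ 2 + β) / x₁) (((x₂ ^ 2 + β) / x₁ + β) / x₂) =
      KtilB2 (1 + β) 1 1 β x₁ x₂ := by
  rw [deformedB2_snd_eq h₁ h₂] at h₂'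
  rw [KtilB2_deformedB2_eq_iff h₁ h₂ (div_ne_zero_iff.1 h₁').1 (div_ne_zero_iff.1 h₂').1,
    invarianceCoeffs_self]
  simp

theorem eq_of_invarianceCoeffs_eq_zero {b₁ b₂ κ₁ κ₂ κ₃ κ₄ : ℂ} (hb₂ : b₂ ≠ 0)
    (h : invarianceCoeffs b₁ b₂ κ₁ κ₂ κ₃ κ₄ = 0) : b₁ = b₂ := by
  have hκ₃ : 1 - κ₃ = 0 := by simpa [invarianceCoeffs] using congrFun₂ h 0 3
  have hκ₂ : κ₂ - 1 = 0 := by simpa [invarianceCoeffs] using congrFun₂ h 1 3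
  have hx₁_cubed : b₂ ^ 2 * κ₃ - b₁ * b₂ * κ₂ = 0 := by
    simpa [invarianceCoeffs] using congrFun₂ h 3 0
  have : b₂ * (b₁ - b₂) = 0 := by
    linear_combination -b₂ ^ 2 * hκ₃ - b₁ * b₂ * hκ₂ - hx₁_cubed
  exact sub_eq_zero.1 ((mul_eq_zero.1 this).resolve_left hb₂)

theorem deformed_B2_integrability (b₁ b₂ : ℂ) (hb₂ : b₂ ≠ 0) :
    ((∃ κ₁ κ₂ κ₃ κ₄ : ℂ, ∀ x₁ x₂ : ℂ, x₁ ≠ 0 → x₂ ≠ 0 →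
        (x₂ ^ 2 + b₁) / x₁ ≠ 0 → ((x₂ ^ 2 + b₁) / x₁ + b₂) / x₂ ≠ 0 →
        KtilB2 κ₁ κ₂ κ₃ κ₄ ((x₂ ^ 2 + b₁) / x₁) (((x₂ ^ 2 + b₁) / x₁ + b₂) / x₂) =
          KtilB2 κ₁ κ₂ κ₃ κ₄ x₁ x₂) ↔ b₁ = b₂) ∧
    (b₁ = b₂ → ∀ x₁ x₂ : ℂ, x₁ ≠ 0 → x₂ ≠ 0 →
        (x₂ ^ 2 + b₁) / x₁ ≠ 0 → ((x₂ ^ 2 + b₁) / x₁ + b₂) / x₂ ≠ 0 →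
        KtilB2 (1 + b₁) 1 1 b₁ ((x₂ ^ 2 + b₁) / x₁) (((x₂ ^ 2 + b₁) / x₁ + b₂) / x₂) =
          KtilB2 (1 + b₁) 1 1 b₁ x₁ x₂) := by
  refine ⟨⟨?_, ?_⟩, ?_⟩
  · rintro ⟨κ₁, κ₂, κ₃, κ₄, h⟩
    exact eq_of_invarianceCoeffs_eq_zero hb₂ (invarianceCoeffs_eq_zero_of_invariant hb₂ h)
  · rintro rfl
    exact ⟨_, _, _, _, fun _ _ => KtilB2_deformedB2_eq_self⟩
  · rintro rfl _ _
    exact KtilB2_deformedB2_eq_self
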